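/- arXiv:1912.06244 — 4 statements merged into one kernel-verified Lean document; each statement's English description precedes it below -/
import Mathlib

section
/- Screening contract (Proposition 1, uninformed case): Let Θ₁ ⊆ Δ(S) contain two distinct points f_x, f_y, and set ε = ‖f_x − f_y‖₂²/8 (any ε < ‖f_x−f_y‖₂²/4 works). Then for every finitely supported randomized forecast ξ₁ on Δ(S) there exists f ∈ Θ₁ and a forecast f₂ ∈ Δ(S) such that the expected payoff Σ_i w_i (E^f[B(f_i,·)] − E^f[B(f₂,·)] + ε) ≤ ε − Σ_i w_i ‖f − f_i‖₂² < 0, where (w_i, f_i) are the weights and support of ξ₁. In particular, taking f₂ = f (the truth), the uninformed expert's minmax payoff is negative. -/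
open Finset

noncomputable def Brier {S : Type*} [Fintype S] (g : S → ℝ) (s : S) : ℝ :=
  2 * g s - ∑ s', (g s')^2 - 1

lemma brier_exp {S : Type*} [Fintype S] (f g : S → ℝ) (hf : ∑ s, f s = 1) :
    ∑ s, f s * Brier g s = 2 * (∑ s, f s * g s) - (∑ s, (g s)^2) - 1 := by
  unfold Brier
  have : ∀ s : S, f s * (2 * g s - ∑ s', (g s')^2 - 1)
      = 2 * (f s * g s) - f s * ((∑ s', (g s')^2) + 1) := by intro s; ring
  simp_rw [this]
  rw [Finset.sum_sub_distrib, ← Finset.mul_sum, ← Finset.sum_mul, hf]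
  ring

lemma brier_diff {S : Type*} [Fintype S] (f g : S → ℝ) (hf : ∑ s, f s = 1) :
    (∑ s, f s * Brier g s) - (∑ s, f s * Brier f s) = -∑ s, (f s - g s)^2 := by
  rw [brier_exp f g hf, brier_exp f f hf]
  have : ∀ s : S, (f s - g s)^2 = (f s)^2 - 2 * (f s * g s) + (g s)^2 := by
    intro s; ring
  simp_rw [this]
  rw [Finset.sum_add_distrib, Finset.sum_sub_distrib, ← Finset.mul_sum]
  have : ∀ s : S, f s * f s = (f s)^2 := by intro s; ring
  simp_rw [this]
  ring

theorem uninformed_rejects {S : Type*} [Fintype S]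
    (Θ₁ : Set (S → ℝ)) (fx fy : S → ℝ)
    (hfx : fx ∈ Θ₁) (hfy : fy ∈ Θ₁) (hne : fx ≠ fy)
    (hΘ : ∀ f ∈ Θ₁, (∀ s, 0 ≤ f s) ∧ ∑ s, f s = 1)
    (ε : ℝ) (hε : ε = (∑ s, (fx s - fy s)^2) / 8)
    {ι : Type*} [Fintype ι] (w : ι → ℝ) (fi : ι → S → ℝ)
    (hw0 : ∀ i, 0 ≤ w i) (hw1 : ∑ i, w i = 1)
    (hfi : ∀ i, (∀ s, 0 ≤ fi i s) ∧ ∑ s, fi i s = 1) :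
    ∃ f ∈ Θ₁, ∃ f₂ : S → ℝ, ((∀ s, 0 ≤ f₂ s) ∧ ∑ s, f₂ s = 1) ∧
      (∑ i, w i * ((∑ s, f s * Brier (fi i) s) - (∑ s, f s * Brier f₂ s) + ε))
        ≤ ε - ∑ i, w i * ∑ s, (f s - fi i s)^2 ∧
      ε - ∑ i, w i * ∑ s, (f s - fi i s)^2 < 0 := by
  obtain ⟨hx0, hx1⟩ := hΘ fx hfx
  obtain ⟨hy0, hy1⟩ := hΘ fy hfy
  -- ε > 0
  have hDpos : 0 < ∑ s, (fx s - fy s)^2 := by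
    obtain ⟨s0, hs0⟩ : ∃ s, fx s ≠ fy s := by
      by_contra h; push_neg at h; exact hne (funext h)
    apply Finset.sum_pos' (fun s _ => sq_nonneg _)
    exact ⟨s0, Finset.mem_univ s0, by have := sub_ne_zero.mpr hs0; positivity⟩
  have hεpos : 0 < ε := by rw [hε]; linarith
  -- parallelogram bound
  have hpar : ∀ i, (∑ s, (fx s - fi i s)^2) + (∑ s, (fy s - fi i s)^2)
      ≥ (∑ s, (fx s - fy s)^2) / 2 := by
    intro i
    rw [← Finset.sum_add_distrib, ge_iff_le, div_le_iff₀ (by norm_num),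
      Finset.sum_mul]
    apply Finset.sum_le_sum
    intro s _
    nlinarith [sq_nonneg (fx s + fy s - 2 * fi i s)]
  have hsum : (∑ i, w i * ∑ s, (fx s - fi i s)^2)
      + (∑ i, w i * ∑ s, (fy s - fi i s)^2) ≥ 4 * ε := by
    rw [← Finset.sum_add_distrib]
    have : (4 : ℝ) * ε = ∑ i, w i * ((∑ s, (fx s - fy s)^2) / 2) := by
      rw [← Finset.sum_mul, hw1]; rw [hε]; ring
    rw [this]
    apply Finset.sum_le_sum
    intro i _
    rw [← mul_add]
    exact mul_le_mul_of_nonneg_left (hpar i) (hw0 i)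
  -- pick f among fx, fy with Σ w_i D > ε
  have hkey : ∃ f, f ∈ Θ₁ ∧ (∑ s, f s = 1) ∧ ε < ∑ i, w i * ∑ s, (f s - fi i s)^2 := by
    by_cases h : ε < ∑ i, w i * ∑ s, (fx s - fi i s)^2
    · exact ⟨fx, hfx, hx1, h⟩
    · refine ⟨fy, hfy, hy1, by push_neg at h; linarith⟩
  obtain ⟨f, hfΘ, hf1, hflt⟩ := hkey
  refine ⟨f, hfΘ, f, ⟨(hΘ f hfΘ).1, hf1⟩, le_of_eq ?_, by linarith⟩
  have heq : ∀ i, (∑ s, f s * Brier (fi i) s) - (∑ s, f s * Brier f s) + ε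
      = ε - ∑ s, (f s - fi i s)^2 := by
    intro i; rw [brier_diff f (fi i) hf1]; ring
  calc (∑ i, w i * ((∑ s, f s * Brier (fi i) s) - (∑ s, f s * Brier f s) + ε) : ℝ)
      = ∑ i, w i * (ε - ∑ s, (f s - fi i s)^2) := by simp_rw [heq]
    _ = ε - ∑ i, w i * ∑ s, (f s - fi i s)^2 := by
        simp_rw [mul_sub, Finset.sum_sub_distrib, ← Finset.sum_mul, hw1, one_mul]
end

section
/- Combined screening theorem (Proposition 1): Let Θ₁ ⊆ Δ(S) contain two distinct points f_x, f_y and define C₁(f₁,f₂,s) = B(f₁,s) − B(f₂,s) + ε with 0 < ε < ‖f_x − f_y‖₂²/4. Then (i) for every f, f₂ ∈ Δ(S), E^f[C₁(f,f₂,·)] > 0; (ii) for every f, f₂ and f₁ ≠ f, E^f[C₁(f,f₂,·)] > E^f[C₁(f₁,f₂,·)]; and (iii) for every finitely supported randomized forecast ξ₁, min over f ∈ {f_x,f_y} of Σ_i w_i E^f[C₁(f_i, f, ·)] < 0. -/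
open Finset

/-- Contract C₁(f₁,f₂,s) = B(f₁,s) − B(f₂,s) + ε -/
noncomputable def C₁ {S : Type*} [Fintype S] (ε : ℝ) (f₁ f₂ : S → ℝ) (s : S) : ℝ :=
  Brier f₁ s - Brier f₂ s + ε


lemma sq_diff_sum {S : Type*} [Fintype S] (f g : S → ℝ) :
    ∑ s, (f s - g s)^2 = ∑ s, (f s)^2 - 2*∑ s, f s * g s + ∑ s, (g s)^2 := by
  rw [Finset.sum_congr rfl (fun s _ => sub_sq (f s) (g s)),
    Finset.sum_add_distrib, Finset.sum_sub_distrib, Finset.mul_sum]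
  ring_nf

lemma exp_C {S : Type*} [Fintype S] (ε : ℝ) (f f₁ f₂ : S → ℝ) (hf : ∑ s, f s = 1) :
    ∑ s, f s * C₁ ε f₁ f₂ s =
      2*∑ s, f s * f₁ s - ∑ s, (f₁ s)^2 - (2*∑ s, f s * f₂ s - ∑ s, (f₂ s)^2) + ε := by
  have key : ∀ s : S, f s * C₁ ε f₁ f₂ s =
      2*(f s * f₁ s) - f s * (∑ s', (f₁ s')^2) - (2*(f s * f₂ s) - f s * (∑ s', (f₂ s')^2)) + f s * ε := by
    intro s; simp only [C₁, Brier]; ring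
  rw [Finset.sum_congr rfl (fun s _ => key s), Finset.sum_add_distrib, Finset.sum_sub_distrib,
    Finset.sum_sub_distrib, Finset.sum_sub_distrib, ← Finset.sum_mul, ← Finset.sum_mul,
    ← Finset.sum_mul, hf]
  rw [← Finset.mul_sum]
  simp only [mul_assoc, ← Finset.mul_sum]
  ring

theorem screening_contract {S : Type*} [Fintype S]
    (Θ₁ : Set (S → ℝ)) (fx fy : S → ℝ)
    (hfx : fx ∈ Θ₁) (hfy : fy ∈ Θ₁) (hne : fx ≠ fy)
    (hΘ : ∀ f ∈ Θ₁, (∀ s, 0 ≤ f s) ∧ ∑ s, f s = 1)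
    (ε : ℝ) (hε0 : 0 < ε) (hε : ε < (∑ s, (fx s - fy s)^2) / 4) :
    (∀ f f₂ : S → ℝ, ((∀ s, 0 ≤ f s) ∧ ∑ s, f s = 1) →
      ((∀ s, 0 ≤ f₂ s) ∧ ∑ s, f₂ s = 1) →
      0 < ∑ s, f s * C₁ ε f f₂ s) ∧
    (∀ f f₁ f₂ : S → ℝ, ((∀ s, 0 ≤ f s) ∧ ∑ s, f s = 1) →
      ((∀ s, 0 ≤ f₁ s) ∧ ∑ s, f₁ s = 1) →
      ((∀ s, 0 ≤ f₂ s) ∧ ∑ s, f₂ s = 1) → f₁ ≠ f →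
      ∑ s, f s * C₁ ε f f₂ s > ∑ s, f s * C₁ ε f₁ f₂ s) ∧
    (∀ (ι : Type) [Fintype ι], ∀ (w : ι → ℝ) (fi : ι → S → ℝ),
      (∀ i, 0 ≤ w i) → ∑ i, w i = 1 →
      (∀ i, (∀ s, 0 ≤ fi i s) ∧ ∑ s, fi i s = 1) →
      min (∑ i, w i * ∑ s, fx s * C₁ ε (fi i) fx s)
          (∑ i, w i * ∑ s, fy s * C₁ ε (fi i) fy s) < 0) := by
  refine ⟨?_, ?_, ?_⟩
  · intro f f₂ hf hf₂
    rw [exp_C ε f f f₂ hf.2]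
    simp only [← sq]
    have h1 : (0:ℝ) ≤ ∑ s, (f s - f₂ s)^2 :=
      Finset.sum_nonneg fun s _ => sq_nonneg _
    rw [sq_diff_sum] at h1
    nlinarith [sq_nonneg (∑ s, f s)]
  · intro f f₁ f₂ hf hf₁ hf₂ hne1
    rw [exp_C ε f f f₂ hf.2, exp_C ε f f₁ f₂ hf.2]
    simp only [← sq]
    have h1 : (0:ℝ) < ∑ s, (f s - f₁ s)^2 := by
      apply Finset.sum_pos' (fun s _ => sq_nonneg _)
      obtain ⟨s, hs⟩ := Function.ne_iff.mp (Ne.symm hne1)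
      have hs' : f s - f₁ s ≠ 0 := sub_ne_zero.mpr hs
      exact ⟨s, Finset.mem_univ s, by positivity⟩
    rw [sq_diff_sum] at h1
    nlinarith
  · intro ι _ w fi hw hw1 hfi
    have key : ∀ (g : S → ℝ), (∑ s, g s = 1) → ∀ i,
        ∑ s, g s * C₁ ε (fi i) g s = ε - ∑ s, (fi i s - g s)^2 := by
      intro g hg i
      rw [exp_C ε g (fi i) g hg, sq_diff_sum]
      have : ∑ s, fi i s * g s = ∑ s, g s * fi i s :=
        Finset.sum_congr rfl fun s _ => mul_comm _ _
      simp only [← sq] at this ⊢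
      rw [this]; ring
    have hx := (hΘ fx hfx).2
    have hy := (hΘ fy hfy).2
    set A := ∑ i, w i * ∑ s, fx s * C₁ ε (fi i) fx s with hA
    set B := ∑ i, w i * ∑ s, fy s * C₁ ε (fi i) fy s with hB
    have hsum : A + B ≤ 2*ε - (∑ s, (fx s - fy s)^2) / 2 := by
      have hAB : A + B = ∑ i, w i * ((ε - ∑ s, (fi i s - fx s)^2) + (ε - ∑ s, (fi i s - fy s)^2)) := by
        rw [hA, hB, ← Finset.sum_add_distrib]
        refine Finset.sum_congr rfl fun i _ => ?_
        rw [key fx hx i, key fy hy i]; ring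
      rw [hAB]
      calc ∑ i, w i * ((ε - ∑ s, (fi i s - fx s)^2) + (ε - ∑ s, (fi i s - fy s)^2))
          ≤ ∑ i, w i * (2*ε - (∑ s, (fx s - fy s)^2) / 2) := by
            refine Finset.sum_le_sum fun i _ => ?_
            refine mul_le_mul_of_nonneg_left ?_ (hw i)
            have hpt : (∑ s, (fx s - fy s)^2) / 2 ≤
                (∑ s, (fi i s - fx s)^2) + ∑ s, (fi i s - fy s)^2 := by
              rw [← Finset.sum_add_distrib]
              rw [div_le_iff₀ (by norm_num : (0:ℝ) < 2)]
              rw [Finset.sum_mul]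
              refine Finset.sum_le_sum fun s _ => ?_
              nlinarith [sq_nonneg (2*fi i s - fx s - fy s)]
            linarith
        _ = 2*ε - (∑ s, (fx s - fy s)^2) / 2 := by
            rw [← Finset.sum_mul, hw1, one_mul]
    have hmin : min A B ≤ (A + B) / 2 := by
      rcases le_total A B with h | h
      · rw [min_eq_left h]; linarith
      · rw [min_eq_right h]; linarith
    have : (A + B) / 2 < 0 := by linarith
    linarith
end

section
/- Better-informed expert accepts (Proposition 2, part 1): Suppose expert 1's plausible set is Θ₁ = {f ∈ Δ(S) : ‖f − f₁‖₂ ≤ ε₁} and the contract pays C₁(g, f₂, s) = B(g,s) − B(f₂,s) + γ with γ > ε₁². Then by forecasting f₁ with probability 1, for every f ∈ Θ₁ and every rival forecast f₂ ∈ Δ(S), the expected payoff E^f[C₁(f₁, f₂, ·)] = ‖f − f₂‖₂² + γ − ‖f − f₁‖₂² ≥ γ − ε₁² > 0. -/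
open Finset

theorem better_informed_accepts {S : Type*} [Fintype S]
    (f₁ : S → ℝ) (hf₁ : (∀ s, 0 ≤ f₁ s) ∧ ∑ s, f₁ s = 1)
    (ε₁ γ : ℝ) (hε₁ : 0 < ε₁) (hγ : ε₁^2 < γ)
    (f f₂ : S → ℝ)
    (hf : (∀ s, 0 ≤ f s) ∧ ∑ s, f s = 1)
    (hfΘ : Real.sqrt (∑ s, (f s - f₁ s)^2) ≤ ε₁)
    (hf₂ : (∀ s, 0 ≤ f₂ s) ∧ ∑ s, f₂ s = 1) :
    ∑ s, f s * (Brier f₁ s - Brier f₂ s + γ)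
      = ∑ s, (f s - f₂ s)^2 + γ - ∑ s, (f s - f₁ s)^2 ∧
    ∑ s, f s * (Brier f₁ s - Brier f₂ s + γ) ≥ γ - ε₁^2 ∧
    0 < γ - ε₁^2 := by
  obtain ⟨hf0, hf1⟩ := hf
  have key : ∑ s, f s * (Brier f₁ s - Brier f₂ s + γ)
      = ∑ s, (f s - f₂ s)^2 + γ - ∑ s, (f s - f₁ s)^2 := by
    simp only [Brier]
    have e1 : ∀ s : S, f s * ((2 * f₁ s - ∑ s', (f₁ s')^2 - 1) -
        (2 * f₂ s - ∑ s', (f₂ s')^2 - 1) + γ)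
        = 2 * (f s * f₁ s) - 2 * (f s * f₂ s)
          + f s * (γ + ∑ s', (f₂ s')^2 - ∑ s', (f₁ s')^2) := by
      intro s; ring
    rw [Finset.sum_congr rfl fun s _ => e1 s]
    rw [Finset.sum_add_distrib, Finset.sum_sub_distrib, ← Finset.mul_sum,
      ← Finset.mul_sum, ← Finset.sum_mul, hf1, one_mul]
    have e2 : ∀ s : S, (f s - f₂ s)^2 = f s ^ 2 - 2 * (f s * f₂ s) + f₂ s ^ 2 := by
      intro s; ring
    have e3 : ∀ s : S, (f s - f₁ s)^2 = f s ^ 2 - 2 * (f s * f₁ s) + f₁ s ^ 2 := by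
      intro s; ring
    rw [Finset.sum_congr rfl fun s _ => e2 s, Finset.sum_congr rfl fun s _ => e3 s]
    simp only [Finset.sum_add_distrib, Finset.sum_sub_distrib, Finset.mul_sum]
    ring
  have hnn : (0:ℝ) ≤ ∑ s, (f s - f₁ s)^2 :=
    Finset.sum_nonneg fun s _ => sq_nonneg _
  have hle : ∑ s, (f s - f₁ s)^2 ≤ ε₁^2 := by
    have := hfΘ
    nlinarith [Real.sq_sqrt hnn, Real.sqrt_nonneg (∑ s, (f s - f₁ s)^2)]
  have hnn2 : (0:ℝ) ≤ ∑ s, (f s - f₂ s)^2 :=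
    Finset.sum_nonneg fun s _ => sq_nonneg _
  refine ⟨key, ?_, by linarith⟩
  rw [key]; linarith
end

section
/- Less-informed expert rejects (Proposition 2, part 2): Suppose expert 2's plausible set Θ₂ = {f ∈ Δ(S) : ‖f − f₂‖₂ ≤ ε₂} contains two points f_x, f_y with ‖f_x − f_y‖₂² ≥ 2ε₂² (e.g., nearly antipodal points of the ball, when such exist in Δ(S)), and the contract pays C₂(g, f', s) = B(g,s) − B(f',s) + γ with γ < ε₂²/2 ≤ ‖f_x−f_y‖₂²/4. Then for every finitely supported randomized forecast ξ₂, there exists f ∈ Θ₂ such that the expected payoff against the truthful rival forecast f is Σ_i w_i (γ − ‖f − g_i‖₂²) < 0, so expert 2's minmax payoff is negative. -/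
open Finset

theorem less_informed_rejects {S : Type*} [Fintype S]
    (f₂ : S → ℝ) (ε₂ : ℝ) (hε₂ : 0 < ε₂)
    (Θ₂ : Set (S → ℝ))
    (hΘ₂ : Θ₂ = {f | ((∀ s, 0 ≤ f s) ∧ ∑ s, f s = 1) ∧
      Real.sqrt (∑ s, (f s - f₂ s)^2) ≤ ε₂})
    (fx fy : S → ℝ) (hfx : fx ∈ Θ₂) (hfy : fy ∈ Θ₂)
    (hfar : ∑ s, (fx s - fy s)^2 ≥ 2 * ε₂^2)
    (γ : ℝ) (hγ0 : 0 < γ) (hγ : γ < ε₂^2 / 2)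
    {ι : Type*} [Fintype ι] (w : ι → ℝ) (gi : ι → S → ℝ)
    (hw0 : ∀ i, 0 ≤ w i) (hw1 : ∑ i, w i = 1)
    (hgi : ∀ i, (∀ s, 0 ≤ gi i s) ∧ ∑ s, gi i s = 1) :
    ∃ f ∈ Θ₂, ∑ i, w i * (γ - ∑ s, (f s - gi i s)^2) < 0 := by
  set A := ∑ i, w i * ∑ s, (fx s - gi i s)^2 with hA
  set B := ∑ i, w i * ∑ s, (fy s - gi i s)^2 with hB
  have key : A + B ≥ ε₂ ^ 2 := by
    have h1 : ∀ i, ∑ s, (fx s - gi i s)^2 + ∑ s, (fy s - gi i s)^2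
        ≥ (∑ s, (fx s - fy s)^2) / 2 := by
      intro i
      rw [← Finset.sum_add_distrib, ge_iff_le, div_le_iff₀ (by norm_num : (0:ℝ) < 2),
        Finset.sum_mul]
      apply Finset.sum_le_sum
      intro s _
      nlinarith [sq_nonneg (fx s + fy s - 2 * gi i s)]
    have h2 : A + B ≥ ∑ i, w i * ((∑ s, (fx s - fy s)^2) / 2) := by
      rw [hA, hB, ← Finset.sum_add_distrib]
      apply Finset.sum_le_sum
      intro i _
      rw [← mul_add]
      exact mul_le_mul_of_nonneg_left (h1 i) (hw0 i)
    have h3 : ∑ i, w i * ((∑ s, (fx s - fy s)^2) / 2) = (∑ s, (fx s - fy s)^2) / 2 := by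
      rw [← Finset.sum_mul, hw1, one_mul]
    rw [h3] at h2
    nlinarith
  rcases le_total A B with h | h
  · refine ⟨fy, hfy, ?_⟩
    have : ∑ i, w i * (γ - ∑ s, (fy s - gi i s)^2) = γ - B := by
      simp only [mul_sub, Finset.sum_sub_distrib, ← Finset.sum_mul, hw1, one_mul, hB]
    rw [this]; nlinarith
  · refine ⟨fx, hfx, ?_⟩
    have : ∑ i, w i * (γ - ∑ s, (fx s - gi i s)^2) = γ - A := by
      simp only [mul_sub, Finset.sum_sub_distrib, ← Finset.sum_mul, hw1, one_mul, hA]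
    rw [this]; nlinarith
end
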